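/- arXiv:2407.06609 — 2 statements merged into one kernel-verified Lean document; each statement's English description precedes it below -/
import Mathlib

section
/- Let V be a finite-dimensional real inner product space, let f : V ≃ V be a linear isometric equivalence of V, and let x be a real number with 0 < x < 1. Then the endomorphism E = id + (2x/(1-x)²)·(id - (1/2)·(f + f⁻¹)) has positive determinant and log det E = -2·(dim V)·log(1-x) - 2·∑_{k=1}^∞ (x^k / k)·tr(f^k), where tr(f^k) denotes the trace of the k-th iterate of the linear map underlying f and the series converges. -/
/-!
Work in an orthonormal eigenbasis of the symmetric operator `f + f⁻¹`, whose eigenvalues are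
`2 cos θᵢ` with `θᵢ ∈ [0, π]`. Since `f f⁻¹ = 1`, `fᵏ + f⁻ᵏ` is the rescaled Chebyshev polynomial
`Cₖ` evaluated at `f + f⁻¹`, and `tr f⁻ᵏ = tr fᵏ` because `f⁻¹` is the adjoint of `f`; hence
`tr fᵏ = ∑ᵢ cos (k θᵢ)`. In the same basis `E` is diagonal with entries
`(1 - 2x cos θᵢ + x²) / (1 - x)²`, so both sides split over `i`, and each summand is the real part
of `-log (1 - x e^{iθ}) = ∑ₖ xᵏ e^{ikθ} / k`.
-/

open Module Polynomial Real

namespace LinearMap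

variable {R M ι : Type*} [CommRing R] [AddCommGroup M] [Module R M] [Fintype ι] [DecidableEq ι]
  {g : M →ₗ[R] M} {c : ι → R}

theorem toMatrix_eq_diagonal_of_apply_basis (b : Module.Basis ι R M)
    (h : ∀ i, g (b i) = c i • b i) :
    toMatrix b b g = Matrix.diagonal c := by
  ext i j
  rw [toMatrix_apply, h, map_smul, b.repr_self, Finsupp.smul_apply, Finsupp.single_apply,
    Matrix.diagonal_apply]
  split_ifs <;> simp_all [eq_comm]

theorem det_eq_prod_of_apply_basis (b : Module.Basis ι R M) (h : ∀ i, g (b i) = c i • b i) :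
    LinearMap.det g = ∏ i, c i := by
  rw [← det_toMatrix b, toMatrix_eq_diagonal_of_apply_basis b h, Matrix.det_diagonal]

theorem trace_eq_sum_of_apply_basis (b : Module.Basis ι R M) (h : ∀ i, g (b i) = c i • b i) :
    trace R M g = ∑ i, c i := by
  rw [trace_eq_matrix_trace R b, toMatrix_eq_diagonal_of_apply_basis b h, Matrix.trace_diagonal]

end LinearMap

theorem Polynomial.Chebyshev.aeval_C_add_of_mul_eq_one {R A : Type*} [CommRing R] [Ring A]
    [Algebra R A] {a b : A} (hab : a * b = 1) (hba : b * a = 1) (n : ℕ) :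
    aeval (a + b) (Chebyshev.C R n) = a ^ n + b ^ n := by
  induction n using Nat.twoStepInduction with
  | zero => simp [Chebyshev.C_zero, map_ofNat, one_add_one_eq_two]
  | one => simp [Chebyshev.C_one]
  | more n ih₀ ih₁ =>
    have hcast : ((n + 2 : ℕ) : ℤ) = (n : ℤ) + 2 := by push_cast; ring
    rw [hcast, Chebyshev.C_add_two, map_sub, map_mul, aeval_X, ← Nat.cast_one (R := ℤ),
      ← Nat.cast_add, ih₀, ih₁]
    have hab' : a * b ^ (n + 1) = b ^ n := by rw [pow_succ', ← mul_assoc, hab, one_mul]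
    have hba' : b * a ^ (n + 1) = a ^ n := by rw [pow_succ', ← mul_assoc, hba, one_mul]
    rw [add_mul, mul_add, mul_add, hab', hba', ← pow_succ', ← pow_succ']
    abel

theorem Real.hasSum_pow_div_mul_cos {x : ℝ} (hx : |x| < 1) (θ : ℝ) :
    HasSum (fun k : ℕ => x ^ (k + 1) / (k + 1) * cos ((k + 1) * θ))
      (-log (1 - 2 * x * cos θ + x ^ 2) / 2) := by
  set z : ℂ := x * Complex.exp (θ * Complex.I)
  have hz : ‖z‖ < 1 := by simpa [z, Complex.norm_exp_ofReal_mul_I] using hx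
  have hterm (n : ℕ) : (z ^ n / n).re = x ^ n / n * cos (n * θ) := by
    have : z ^ n / n = ((x ^ n / n : ℝ) : ℂ) * Complex.exp ((n * θ : ℝ) * Complex.I) := by
      simp only [z, mul_pow, ← Complex.exp_nat_mul]
      push_cast
      ring_nf
    rw [this, Complex.re_ofReal_mul, Complex.exp_ofReal_mul_I_re]
  have hnormSq : ‖1 - z‖ ^ 2 = 1 - 2 * x * cos θ + x ^ 2 := by
    rw [Complex.sq_norm, Complex.normSq_apply]
    simp only [z, Complex.sub_re, Complex.sub_im, Complex.one_re, Complex.one_im,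
      Complex.re_ofReal_mul, Complex.im_ofReal_mul, Complex.exp_ofReal_mul_I_re,
      Complex.exp_ofReal_mul_I_im]
    linear_combination x ^ 2 * sin_sq_add_cos_sq θ
  have h := (hasSum_nat_add_iff' 1).2 (Complex.hasSum_re (Complex.hasSum_taylorSeries_neg_log hz))
  have hsummand : (fun k : ℕ => x ^ (k + 1) / (k + 1) * cos ((k + 1) * θ))
      = fun k : ℕ => (z ^ (k + 1) / (k + 1 : ℕ)).re := by
    ext k
    rw [hterm]
    push_cast
    rfl
  have hsum : -log (1 - 2 * x * cos θ + x ^ 2) / 2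
      = (-Complex.log (1 - z)).re - ∑ k ∈ Finset.range 1, (z ^ k / k).re := by
    rw [Finset.sum_range_one, ← hnormSq, log_pow, Complex.neg_re, Complex.log_re]
    simp only [pow_zero, CharP.cast_eq_zero, div_zero, Complex.zero_re, sub_zero]
    push_cast
    ring
  rw [hsummand, hsum]
  exact h

namespace LinearMap.IsSymmetric

variable {𝕜 E : Type*} [RCLike 𝕜] [NormedAddCommGroup E] [InnerProductSpace 𝕜 E]
  [FiniteDimensional 𝕜 E] {T : E →ₗ[𝕜] E} {n : ℕ} (hT : T.IsSymmetric) (hn : finrank 𝕜 E = n)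

theorem aeval_apply_eigenvectorBasis (p : 𝕜[X]) (i : Fin n) :
    aeval T p (hT.eigenvectorBasis hn i)
      = p.eval (hT.eigenvalues hn i : 𝕜) • hT.eigenvectorBasis hn i :=
  Module.End.aeval_apply_of_hasEigenvector (hT.hasEigenvector_eigenvectorBasis hn i)

theorem trace_aeval (p : 𝕜[X]) :
    trace 𝕜 E (aeval T p) = ∑ i, p.eval (hT.eigenvalues hn i : 𝕜) :=
  trace_eq_sum_of_apply_basis (hT.eigenvectorBasis hn).toBasis fun i => by
    simpa using hT.aeval_apply_eigenvectorBasis hn p i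

theorem abs_eigenvalues_le {C : ℝ} (hC : ∀ v, ‖T v‖ ≤ C * ‖v‖) (i : Fin n) :
    |hT.eigenvalues hn i| ≤ C := by
  have hnorm := (hT.eigenvectorBasis hn).orthonormal.1 i
  simpa [hT.apply_eigenvectorBasis, norm_smul, hnorm] using hC (hT.eigenvectorBasis hn i)

end LinearMap.IsSymmetric

namespace LinearIsometryEquiv

section RCLike

variable {𝕜 V : Type*} [RCLike 𝕜] [NormedAddCommGroup V] [InnerProductSpace 𝕜 V]
  (f : V ≃ₗᵢ[𝕜] V)

theorem inner_apply_eq_inner_symm_apply (u v : V) : inner 𝕜 (f u) v = inner 𝕜 u (f.symm v) := by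
  rw [← f.inner_map_map u (f.symm v), apply_symm_apply]

theorem isSymmetric_add_symm :
    ((f.toLinearEquiv : V →ₗ[𝕜] V) + (f.symm.toLinearEquiv : V →ₗ[𝕜] V)).IsSymmetric := by
  intro u v
  simp only [LinearMap.add_apply, LinearEquiv.coe_coe, coe_toLinearEquiv, inner_add_left,
    inner_add_right, f.inner_apply_eq_inner_symm_apply, f.symm.inner_apply_eq_inner_symm_apply,
    symm_symm, add_comm]

theorem norm_add_symm_apply_le (v : V) :
    ‖((f.toLinearEquiv : V →ₗ[𝕜] V) + (f.symm.toLinearEquiv : V →ₗ[𝕜] V)) v‖ ≤ 2 * ‖v‖ := by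
  simpa [two_mul] using norm_add_le (f v) (f.symm v)

theorem inner_pow_apply_eq_inner_symm_pow_apply (n : ℕ) (u v : V) :
    inner 𝕜 (((f.toLinearEquiv : V →ₗ[𝕜] V) ^ n) u) v
      = inner 𝕜 u (((f.symm.toLinearEquiv : V →ₗ[𝕜] V) ^ n) v) := by
  induction n generalizing v with
  | zero => simp
  | succ n ih =>
    rw [pow_succ' (f.toLinearEquiv : V →ₗ[𝕜] V), pow_succ, Module.End.mul_apply,
      Module.End.mul_apply, ← ih]
    exact f.inner_apply_eq_inner_symm_apply _ v

end RCLike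

variable {V : Type*} [NormedAddCommGroup V] [InnerProductSpace ℝ V] [FiniteDimensional ℝ V]
  (f : V ≃ₗᵢ[ℝ] V)

theorem trace_symm_pow (n : ℕ) :
    LinearMap.trace ℝ V ((f.symm.toLinearEquiv : V →ₗ[ℝ] V) ^ n)
      = LinearMap.trace ℝ V ((f.toLinearEquiv : V →ₗ[ℝ] V) ^ n) := by
  simp only [LinearMap.trace_eq_sum_inner _ (stdOrthonormalBasis ℝ V),
    ← f.inner_pow_apply_eq_inner_symm_pow_apply, real_inner_comm]

-- The angles `θ` with `e^{±iθ}` eigenvalues of `f`, read off from the eigenvalues `2 cos θ`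
-- of `f + f⁻¹`.
noncomputable def rotationAngle (i : Fin (finrank ℝ V)) : ℝ :=
  arccos (f.isSymmetric_add_symm.eigenvalues rfl i / 2)

theorem two_mul_cos_rotationAngle (i : Fin (finrank ℝ V)) :
    2 * cos (f.rotationAngle i) = f.isSymmetric_add_symm.eigenvalues rfl i := by
  have := abs_le.1 (f.isSymmetric_add_symm.abs_eigenvalues_le rfl f.norm_add_symm_apply_le i)
  rw [rotationAngle, cos_arccos] <;> linarith

theorem trace_pow_eq_sum_cos (n : ℕ) :
    LinearMap.trace ℝ V ((f.toLinearEquiv : V →ₗ[ℝ] V) ^ n)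
      = ∑ i, cos (n * f.rotationAngle i) := by
  have hmul : (f.toLinearEquiv : V →ₗ[ℝ] V) * f.symm.toLinearEquiv = 1 := by ext; simp
  have hmul' : (f.symm.toLinearEquiv : V →ₗ[ℝ] V) * f.toLinearEquiv = 1 := by ext; simp
  suffices h : 2 * LinearMap.trace ℝ V ((f.toLinearEquiv : V →ₗ[ℝ] V) ^ n)
      = 2 * ∑ i, cos (n * f.rotationAngle i) by linarith
  calc 2 * LinearMap.trace ℝ V ((f.toLinearEquiv : V →ₗ[ℝ] V) ^ n)
      = LinearMap.trace ℝ V ((f.toLinearEquiv : V →ₗ[ℝ] V) ^ n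
          + (f.symm.toLinearEquiv : V →ₗ[ℝ] V) ^ n) := by
        rw [_root_.map_add, trace_symm_pow, two_mul]
    _ = ∑ i, (Chebyshev.C ℝ n).eval (2 * cos (f.rotationAngle i)) := by
        rw [← Chebyshev.aeval_C_add_of_mul_eq_one (R := ℝ) hmul hmul',
          f.isSymmetric_add_symm.trace_aeval rfl]
        simp only [two_mul_cos_rotationAngle, RCLike.ofReal_real_eq_id, id]
    _ = 2 * ∑ i, cos (n * f.rotationAngle i) := by
        simp only [Chebyshev.C_two_mul_real_cos, Finset.mul_sum, Int.cast_natCast]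

end LinearIsometryEquiv

/-- Equation (3.15): for an isometric automorphism `f` of a finite-dimensional
real inner product space and `0 < x < 1`,
`log det(id + (2x/(1-x)²)(id - (f + f⁻¹)/2)) = -2·dim·log(1-x) - 2∑_{k≥1}(xᵏ/k)tr(fᵏ)`. -/
theorem stmt_7 (V : Type*) [NormedAddCommGroup V] [InnerProductSpace ℝ V]
    [FiniteDimensional ℝ V] (f : V ≃ₗᵢ[ℝ] V) (x : ℝ) (hx0 : 0 < x) (hx1 : x < 1)
    (E : V →ₗ[ℝ] V)
    (hE : E = LinearMap.id + (2 * x / (1 - x) ^ 2) •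
      (LinearMap.id - (1 / 2 : ℝ) •
        ((f.toLinearEquiv : V →ₗ[ℝ] V) + (f.symm.toLinearEquiv : V →ₗ[ℝ] V)))) :
    0 < LinearMap.det E ∧
    HasSum
      (fun k : ℕ => (x ^ (k + 1) / (k + 1)) *
        LinearMap.trace ℝ V ((f.toLinearEquiv : V →ₗ[ℝ] V) ^ (k + 1)))
      (-(Real.log (LinearMap.det E) +
          2 * (Module.finrank ℝ V) * Real.log (1 - x)) / 2) := by
  set b := f.isSymmetric_add_symm.eigenvectorBasis rfl
  set θ := f.rotationAngle
  set P : Fin (finrank ℝ V) → ℝ := fun i => 1 - 2 * x * cos (θ i) + x ^ 2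
  have hP : ∀ i, 0 < P i := fun i => by nlinarith [cos_le_one (θ i)]
  have hx : 0 < (1 - x) ^ 2 := by nlinarith
  have hEb : ∀ i, E (b i) = (P i / (1 - x) ^ 2) • b i := by
    intro i
    rw [hE, LinearMap.add_apply, LinearMap.smul_apply, LinearMap.sub_apply, LinearMap.smul_apply,
      f.isSymmetric_add_symm.apply_eigenvectorBasis, ← f.two_mul_cos_rotationAngle]
    have hscalar :
        P i / (1 - x) ^ 2 = 1 + 2 * x / (1 - x) ^ 2 * (1 - 1 / 2 * (2 * cos (θ i))) := by
      have : 1 - x ≠ 0 := by linarith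
      field_simp
      ring
    simp only [LinearMap.id_apply, RCLike.ofReal_real_eq_id, id, hscalar]
    module
  have hdet : LinearMap.det E = ∏ i, P i / (1 - x) ^ 2 :=
    LinearMap.det_eq_prod_of_apply_basis b.toBasis (by simpa using hEb)
  refine ⟨hdet ▸ Finset.prod_pos fun i _ => div_pos (hP i) hx, ?_⟩
  have hlog : -(log (LinearMap.det E) + 2 * (finrank ℝ V) * log (1 - x)) / 2
      = ∑ i, -log (P i) / 2 := by
    rw [hdet, log_prod fun i _ => (div_pos (hP i) hx).ne']
    simp only [log_div (hP _).ne' hx.ne', log_pow, Finset.sum_sub_distrib, Finset.sum_const,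
      Finset.card_univ, Fintype.card_fin, nsmul_eq_mul, ← Finset.sum_div,
      Finset.sum_neg_distrib]
    push_cast
    ring
  simp only [f.trace_pow_eq_sum_cos, Finset.mul_sum]
  rw [hlog]
  refine hasSum_sum fun i _ => ?_
  push_cast
  exact hasSum_pow_div_mul_cos (abs_lt.2 ⟨by linarith, hx1⟩) (θ i)
end

section
/- Let a > 0 and t > 0, and let s be a complex number with Re s > 1/2. Then t^{-2s} + 2·∑_{k=1}^∞ ((2πk/a)² + t²)^{-s} = (a·Γ(s - 1/2)/(2√π·Γ(s)))·t^{1-2s} + (a/(√π·Γ(s)))·∑_{k=1}^∞ ∫_0^∞ u^{s-3/2}·exp(-(u·t² + a²k²/(4u))) du, where all series and integrals converge. -/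
/-!
Write `λₙ = (2πn/a)² + t²` for `n ∈ ℤ`. The Gamma integral gives
`Γ(s) λₙ^{-s} = ∫₀^∞ u^{s-1} e^{-λₙ u} du`. Summing over `n ∈ ℤ` and exchanging sum and integral
(the norms are summable because `Re s > 1/2`), the integrand becomes `u^{s-1} e^{-t²u} θ(4πu/a²)`
with `θ(x) = ∑ₙ e^{-πxn²}`, and Poisson summation `θ(x) = x^{-1/2} θ(1/x)` turns it into
`a/(2√π) ∑ₙ u^{s-3/2} e^{-(ut² + a²n²/(4u))}`. These dual terms decay like `e^{-|a n| t/2}`, so the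
exchange can be undone; the `n = 0` dual term is again a Gamma integral, `Γ(s-1/2) t^{1-2s}`.
Both sides are even in `n` and fold to sums over `n ≥ 1`.
-/

open Real MeasureTheory Set

namespace SpectralZetaCircle

theorem tsum_int_eq_zero_add_two_mul_tsum_succ {G : Type*} [AddCommGroup G] [UniformSpace G]
    [IsUniformAddGroup G] [CompleteSpace G] [T2Space G] {f : ℤ → G} (hf : f.Even)
    (hsum : Summable f) : ∑' n, f n = f 0 + 2 • ∑' k : ℕ, f ((k : ℤ) + 1) := by
  rw [tsum_int_eq_zero_add_two_mul_tsum_pnat hf hsum, tsum_pnat_eq_tsum_succ (f := fun k => f k)]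
  push_cast
  rfl

theorem summable_exp_abs_int_mul {c : ℝ} (hc : c < 0) :
    Summable fun n : ℤ => rexp (|(n : ℝ)| * c) := by
  have h := summable_exp_nat_mul_iff.mpr hc
  exact .of_nat_of_neg (by simpa using h) (by simpa using h)

theorem summable_sq_add_sq_rpow_neg {c : ℝ} (hc : c ≠ 0) (t : ℝ) {r : ℝ} (hr : 1 / 2 < r) :
    Summable fun n : ℤ => ((c * n) ^ 2 + t ^ 2) ^ (-r) := by
  refine ((summable_abs_int_rpow (b := 2 * r) (by linarith)).mul_left
    (|c| ^ (-(2 * r)))).of_norm_bounded_eventually ?_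
  filter_upwards [Filter.eventually_cofinite_ne 0] with n hn
  have hcn : 0 < |c * n| := abs_pos.2 (mul_ne_zero hc (Int.cast_ne_zero.2 hn))
  calc ‖((c * n) ^ 2 + t ^ 2) ^ (-r)‖ = ((c * n) ^ 2 + t ^ 2) ^ (-r) :=
        norm_of_nonneg (rpow_nonneg (by positivity) _)
    _ ≤ ((c * n) ^ 2) ^ (-r) :=
        rpow_le_rpow_of_nonpos (sq_abs (c * n) ▸ pow_pos hcn 2) (by nlinarith) (by linarith)
    _ = |c| ^ (-(2 * r)) * |(n : ℝ)| ^ (-(2 * r)) := by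
        rw [← sq_abs, ← rpow_natCast, ← rpow_mul hcn.le, abs_mul,
          mul_rpow (abs_nonneg _) (abs_nonneg _)]
        norm_num

theorem norm_ofReal_cpow_mul_exp {u : ℝ} (hu : 0 < u) (w : ℂ) (x : ℝ) :
    ‖(u : ℂ) ^ w * (rexp x : ℂ)‖ = u ^ w.re * rexp x := by
  rw [norm_mul, Complex.norm_cpow_eq_rpow_re_of_pos hu, Complex.norm_real,
    norm_of_nonneg (exp_nonneg x)]

theorem integrableOn_cpow_mul_exp_neg {w : ℂ} (hw : -1 < w.re) {b : ℝ} (hb : 0 < b)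
    {φ : ℝ → ℝ} (hφ : ContinuousOn φ (Ioi 0)) (hbφ : ∀ u ∈ Ioi (0 : ℝ), b * u ≤ φ u) :
    IntegrableOn (fun u : ℝ => (u : ℂ) ^ w * (rexp (-φ u) : ℂ)) (Ioi 0) := by
  have hmaj : IntegrableOn (fun u : ℝ => u ^ w.re * rexp (-(b * u))) (Ioi 0) := by
    simpa [neg_mul] using integrableOn_rpow_mul_exp_neg_mul_rpow hw zero_lt_one hb
  refine hmaj.mono' (ContinuousOn.aestronglyMeasurable (fun u hu => ?_) measurableSet_Ioi) ?_
  · exact (Complex.continuousAt_ofReal_cpow_const u w (.inr (ne_of_gt hu))).continuousWithinAt.mul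
      (Complex.continuous_ofReal.continuousAt.comp_continuousWithinAt (hφ u hu).neg.rexp)
  · filter_upwards [ae_restrict_mem measurableSet_Ioi] with u hu
    rw [norm_ofReal_cpow_mul_exp hu]
    exact mul_le_mul_of_nonneg_left (exp_le_exp.2 (neg_le_neg (hbφ u hu))) (rpow_nonneg hu.le _)

theorem one_div_ofReal_cpow {x : ℝ} (hx : 0 ≤ x) (w : ℂ) : (1 / (x : ℂ)) ^ w = (x : ℂ) ^ (-w) := by
  rw [one_div, Complex.inv_cpow _ _ (by simp [Complex.arg_ofReal_of_nonneg hx, pi_ne_zero.symm]),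
    Complex.cpow_neg]

theorem ofReal_sq_cpow {x : ℝ} (hx : 0 ≤ x) (w : ℂ) :
    ((x ^ 2 : ℝ) : ℂ) ^ w = (x : ℂ) ^ (2 * w) := by
  have harg : (x : ℂ).arg = 0 := Complex.arg_ofReal_of_nonneg hx
  push_cast
  rw [Complex.cpow_ofNat_mul' (by simp [harg, pi_pos]) (by simp [harg, pi_pos.le])]

theorem tsum_exp_neg_sq_int_poisson {a u : ℝ} (ha : 0 < a) (hu : 0 < u) :
    ∑' n : ℤ, rexp (-((2 * π * n / a) ^ 2 * u)) =
      a / (2 * √π * √u) * ∑' n : ℤ, rexp (-(a ^ 2 * n ^ 2 / (4 * u))) := by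
  have hx : 0 < 4 * π * u / a ^ 2 := by positivity
  have hroot : (4 * π * u / a ^ 2) ^ (1 / 2 : ℝ) = 2 * √π * √u / a := by
    rw [← sqrt_eq_rpow, sqrt_div' _ (by positivity), sqrt_sq ha.le, sqrt_mul' _ hu.le,
      sqrt_mul' _ pi_pos.le, show (4 : ℝ) = 2 ^ 2 by norm_num, sqrt_sq zero_le_two]
  have hheat (n : ℤ) : -π * (4 * π * u / a ^ 2) * n ^ 2 = -((2 * π * n / a) ^ 2 * u) := by
    field_simp; ring
  have hdual (n : ℤ) : -π / (4 * π * u / a ^ 2) * n ^ 2 = -(a ^ 2 * n ^ 2 / (4 * u)) := by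
    field_simp
  simpa only [hheat, hdual, hroot, one_div_div] using tsum_exp_neg_mul_int_sq hx

variable (a t : ℝ) (s : ℂ)

noncomputable def heatIntegrand (n u : ℝ) : ℂ :=
  (u : ℂ) ^ (s - 1) * (rexp (-(((2 * π * n / a) ^ 2 + t ^ 2) * u)) : ℂ)

noncomputable def dualIntegrand (n u : ℝ) : ℂ :=
  (u : ℂ) ^ (s - 3 / 2) * (rexp (-(u * t ^ 2 + a ^ 2 * n ^ 2 / (4 * u))) : ℂ)

variable {a t s}

theorem dualIntegrand_neg (n u : ℝ) : dualIntegrand a t s (-n) u = dualIntegrand a t s n u := by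
  simp [dualIntegrand]

theorem integral_heatIntegrand (ht : 0 < t) (hs : 0 < s.re) (n : ℝ) :
    ∫ u in Ioi 0, heatIntegrand a t s n u =
      (((2 * π * n / a) ^ 2 + t ^ 2 : ℝ) : ℂ) ^ (-s) * Complex.Gamma s := by
  have hΛ : 0 < (2 * π * n / a) ^ 2 + t ^ 2 := by positivity
  rw [← one_div_ofReal_cpow hΛ.le, ← Complex.integral_cpow_mul_exp_neg_mul_Ioi hs hΛ]
  refine setIntegral_congr_fun measurableSet_Ioi fun u _ => ?_
  simp [heatIntegrand, Complex.ofReal_exp]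

theorem integral_norm_heatIntegrand (ht : 0 < t) (hs : 0 < s.re) (n : ℝ) :
    ∫ u in Ioi 0, ‖heatIntegrand a t s n u‖ =
      ((2 * π * n / a) ^ 2 + t ^ 2) ^ (-s.re) * Real.Gamma s.re := by
  have hΛ : 0 < (2 * π * n / a) ^ 2 + t ^ 2 := by positivity
  rw [rpow_neg hΛ.le, ← inv_rpow hΛ.le, ← one_div, ← integral_rpow_mul_exp_neg_mul_Ioi hs hΛ]
  refine setIntegral_congr_fun measurableSet_Ioi fun u hu => ?_
  rw [heatIntegrand, norm_ofReal_cpow_mul_exp hu, Complex.sub_re, Complex.one_re]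

theorem integrableOn_heatIntegrand (ht : 0 < t) (hs : 0 < s.re) (n : ℝ) :
    IntegrableOn (heatIntegrand a t s n) (Ioi 0) :=
  integrableOn_cpow_mul_exp_neg (by simpa using hs) (by positivity) (by fun_prop)
    fun _ _ => le_rfl

theorem summable_integral_norm_heatIntegrand (ha : a ≠ 0) (ht : 0 < t) (hs : 1 / 2 < s.re) :
    Summable fun n : ℤ => ∫ u in Ioi 0, ‖heatIntegrand a t s n u‖ := by
  simp_rw [integral_norm_heatIntegrand ht (by linarith : 0 < s.re), mul_div_right_comm _ _ a]
  exact (summable_sq_add_sq_rpow_neg (by positivity) t hs).mul_right _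

theorem summable_sq_add_sq_cpow_neg (ha : a ≠ 0) (ht : 0 < t) (hs : 1 / 2 < s.re) :
    Summable fun n : ℤ => (((2 * π * n / a) ^ 2 + t ^ 2 : ℝ) : ℂ) ^ (-s) := by
  refine .of_norm ((summable_sq_add_sq_rpow_neg (c := 2 * π / a) (by positivity) t hs).congr
    fun n => ?_)
  rw [Complex.norm_cpow_eq_rpow_re_of_pos (by positivity), Complex.neg_re]
  ring_nf

theorem integrableOn_dualIntegrand (ht : 0 < t) (hs : 1 / 2 < s.re) (n : ℝ) :
    IntegrableOn (dualIntegrand a t s n) (Ioi 0) := by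
  have hre : -1 < (s - 3 / 2).re := by
    rw [Complex.sub_re, Complex.div_ofNat_re, Complex.re_ofNat]; linarith
  refine integrableOn_cpow_mul_exp_neg hre (pow_pos ht 2) ?_ fun u hu => ?_
  · exact ContinuousOn.add (by fun_prop) (continuousOn_const.div (by fun_prop)
      fun u hu => by simp_all [ne_of_gt])
  · have : 0 ≤ a ^ 2 * n ^ 2 / (4 * u) := by simp only [mem_Ioi] at hu; positivity
    linarith

theorem integral_norm_dualIntegrand_le (ht : 0 < t) (hs : 1 / 2 < s.re) (n : ℝ) :
    ∫ u in Ioi 0, ‖dualIntegrand a t s n u‖ ≤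
      rexp (|n| * -(|a| * t / 2)) * ∫ u in Ioi 0, u ^ (s.re - 3 / 2) * rexp (-(t ^ 2 / 2 * u)) := by
  have hmaj : IntegrableOn (fun u : ℝ => u ^ (s.re - 3 / 2) * rexp (-(t ^ 2 / 2 * u))) (Ioi 0) := by
    simpa [neg_mul] using
      integrableOn_rpow_mul_exp_neg_mul_rpow (by linarith) zero_lt_one
        (by positivity : 0 < t ^ 2 / 2)
  rw [← integral_const_mul]
  refine setIntegral_mono_on (integrableOn_dualIntegrand ht hs n).norm (hmaj.const_mul _)
    measurableSet_Ioi fun u hu => ?_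
  rw [mem_Ioi] at hu
  -- AM-GM: `t² u / 2 + m² / (4u) ≥ m t / 2` with `m = |a n|`.
  have hexp : |n| * (|a| * t / 2) + t ^ 2 / 2 * u ≤ u * t ^ 2 + a ^ 2 * n ^ 2 / (4 * u) := by
    rw [← sub_nonneg]
    have e : u * t ^ 2 + a ^ 2 * n ^ 2 / (4 * u) - (|n| * (|a| * t / 2) + t ^ 2 / 2 * u) =
        (t ^ 2 * u ^ 2 + (t * u - |a| * |n|) ^ 2) / (4 * u) := by
      rw [← sq_abs a, ← sq_abs n]; field_simp; ring
    rw [e]; positivity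
  have hre : (s - 3 / 2).re = s.re - 3 / 2 := by
    rw [Complex.sub_re, Complex.div_ofNat_re, Complex.re_ofNat]
  rw [dualIntegrand, norm_ofReal_cpow_mul_exp hu, hre, mul_left_comm, ← exp_add]
  exact mul_le_mul_of_nonneg_left (exp_le_exp.2 (by linarith)) (rpow_nonneg hu.le _)

theorem summable_integral_norm_dualIntegrand (ha : a ≠ 0) (ht : 0 < t) (hs : 1 / 2 < s.re) :
    Summable fun n : ℤ => ∫ u in Ioi 0, ‖dualIntegrand a t s n u‖ :=
  ((summable_exp_abs_int_mul (by have := abs_pos.2 ha; nlinarith)).mul_right _).of_nonneg_of_le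
    (fun _ => integral_nonneg fun _ => norm_nonneg _)
    fun n => integral_norm_dualIntegrand_le ht hs n

theorem summable_integral_dualIntegrand (ha : a ≠ 0) (ht : 0 < t) (hs : 1 / 2 < s.re) :
    Summable fun n : ℤ => ∫ u in Ioi 0, dualIntegrand a t s n u :=
  (summable_integral_norm_dualIntegrand ha ht hs).of_norm_bounded
    fun _ => norm_integral_le_integral_norm _

theorem integral_dualIntegrand_zero (ht : 0 < t) (hs : 1 / 2 < s.re) :
    ∫ u in Ioi 0, dualIntegrand a t s 0 u = (t : ℂ) ^ (1 - 2 * s) * Complex.Gamma (s - 1 / 2) := by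
  have hre : 0 < (s - 1 / 2).re := by
    rw [Complex.sub_re, Complex.div_ofNat_re, Complex.one_re]; linarith
  rw [show 1 - 2 * s = 2 * -(s - 1 / 2) by ring, ← ofReal_sq_cpow ht.le,
    ← one_div_ofReal_cpow (by positivity),
    ← Complex.integral_cpow_mul_exp_neg_mul_Ioi hre (pow_pos ht 2)]
  refine setIntegral_congr_fun measurableSet_Ioi fun u _ => ?_
  rw [dualIntegrand]
  push_cast
  ring_nf

theorem tsum_heatIntegrand_eq (ha : 0 < a) {u : ℝ} (hu : 0 < u) :
    ∑' n : ℤ, heatIntegrand a t s n u = (a / (2 * √π) : ℂ) * ∑' n : ℤ, dualIntegrand a t s n u := by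
  have hheat (n : ℤ) : heatIntegrand a t s n u =
      (u : ℂ) ^ (s - 1) * (rexp (-(t ^ 2 * u)) : ℂ) * (rexp (-((2 * π * n / a) ^ 2 * u)) : ℂ) := by
    rw [heatIntegrand, mul_assoc ((u : ℂ) ^ (s - 1)), ← Complex.ofReal_mul, ← exp_add]; ring_nf
  have hdual (n : ℤ) : dualIntegrand a t s n u =
      (u : ℂ) ^ (s - 3 / 2) * (rexp (-(t ^ 2 * u)) : ℂ) *
        (rexp (-(a ^ 2 * n ^ 2 / (4 * u))) : ℂ) := by
    rw [dualIntegrand, mul_assoc, ← Complex.ofReal_mul, ← exp_add]; ring_nf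
  have hsqrt : (u : ℂ) ^ (s - 1) = (u : ℂ) ^ (s - 3 / 2) * (√u : ℂ) := by
    rw [sqrt_eq_rpow, Complex.ofReal_cpow hu.le, ← Complex.cpow_add _ _ (by exact_mod_cast hu.ne')]
    push_cast; ring_nf
  simp_rw [hheat, hdual, tsum_mul_left, ← Complex.ofReal_tsum, tsum_exp_neg_sq_int_poisson ha hu,
    hsqrt]
  have : (√u : ℂ) ≠ 0 := by exact_mod_cast (sqrt_pos.2 hu).ne'
  push_cast
  field_simp

theorem tsum_integral_heatIntegrand (ha : 0 < a) (ht : 0 < t) (hs : 1 / 2 < s.re) :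
    ∑' n : ℤ, ∫ u in Ioi 0, heatIntegrand a t s n u =
      (a / (2 * √π) : ℂ) * ∑' n : ℤ, ∫ u in Ioi 0, dualIntegrand a t s n u := by
  rw [integral_tsum_of_summable_integral_norm
      (fun n : ℤ => integrableOn_heatIntegrand ht (by linarith) n)
      (summable_integral_norm_heatIntegrand ha.ne' ht hs),
    integral_tsum_of_summable_integral_norm (fun n : ℤ => integrableOn_dualIntegrand ht hs n)
      (summable_integral_norm_dualIntegrand ha.ne' ht hs),
    ← integral_const_mul]
  exact setIntegral_congr_fun measurableSet_Ioi fun u hu => tsum_heatIntegrand_eq ha hu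

end SpectralZetaCircle

open SpectralZetaCircle

/-- The intermediate representation of the spectral zeta function of
`Δ_{S¹(a/2π)} + t²` in the proof of Lemma 3.3, obtained from the Mellin
representation and Poisson summation. -/
theorem stmt_13 (a t : ℝ) (ha : 0 < a) (ht : 0 < t) (s : ℂ) (hs : 1 / 2 < s.re) :
    Summable
      (fun k : ℕ => ((((2 * π * ((k : ℝ) + 1) / a) ^ 2 + t ^ 2 : ℝ) : ℂ)) ^ (-s)) ∧
    (∀ k : ℕ, IntegrableOn
      (fun u : ℝ => (u : ℂ) ^ (s - 3 / 2) *
        (Real.exp (-(u * t ^ 2 + a ^ 2 * ((k : ℝ) + 1) ^ 2 / (4 * u))) : ℝ))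
      (Set.Ioi (0 : ℝ))) ∧
    Summable
      (fun k : ℕ => ∫ u in Set.Ioi (0 : ℝ), (u : ℂ) ^ (s - 3 / 2) *
        (Real.exp (-(u * t ^ 2 + a ^ 2 * ((k : ℝ) + 1) ^ 2 / (4 * u))) : ℝ)) ∧
    (t : ℂ) ^ (-2 * s) +
        2 * ∑' k : ℕ,
          ((((2 * π * ((k : ℝ) + 1) / a) ^ 2 + t ^ 2 : ℝ) : ℂ)) ^ (-s) =
      ((a : ℂ) * Complex.Gamma (s - 1 / 2) /
          (2 * (Real.sqrt π : ℂ) * Complex.Gamma s)) * (t : ℂ) ^ (1 - 2 * s) +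
        ((a : ℂ) / ((Real.sqrt π : ℂ) * Complex.Gamma s)) *
          ∑' k : ℕ, ∫ u in Set.Ioi (0 : ℝ), (u : ℂ) ^ (s - 3 / 2) *
            (Real.exp (-(u * t ^ 2 + a ^ 2 * ((k : ℝ) + 1) ^ 2 / (4 * u))) : ℝ) := by
  have hs0 : 0 < s.re := by linarith
  have hsucc : Function.Injective fun k : ℕ => (k : ℤ) + 1 := fun _ _ h => by simpa using h
  have hspec := summable_sq_add_sq_cpow_neg ha.ne' ht hs
  have hdual := summable_integral_dualIntegrand ha.ne' ht hs
  refine ⟨by simpa [Function.comp_def] using hspec.comp_injective hsucc,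
    fun k => integrableOn_dualIntegrand ht hs _,
    by simpa [Function.comp_def, dualIntegrand] using hdual.comp_injective hsucc, ?_⟩
  have hsum := tsum_integral_heatIntegrand ha ht hs
  simp only [integral_heatIntegrand ht hs0] at hsum
  rw [tsum_int_eq_zero_add_two_mul_tsum_succ (fun n => by simp [neg_div]) (hspec.mul_right _),
    tsum_int_eq_zero_add_two_mul_tsum_succ (fun n => by simp [dualIntegrand_neg]) hdual] at hsum
  simp only [Int.cast_add, Int.cast_natCast, Int.cast_one, Int.cast_zero, mul_zero, zero_div,
    zero_pow two_ne_zero, zero_add, ofReal_sq_cpow ht.le, tsum_mul_right, two_nsmul,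
    integral_dualIntegrand_zero ht hs] at hsum
  simp only [dualIntegrand] at hsum
  -- Abstract the series, which `field_simp` would otherwise rewrite inside.
  generalize ∑' k : ℕ, (((2 * π * ((k : ℝ) + 1) / a) ^ 2 + t ^ 2 : ℝ) : ℂ) ^ (-s) = Λ at hsum ⊢
  generalize ∑' k : ℕ, ∫ u in Ioi (0 : ℝ), (u : ℂ) ^ (s - 3 / 2) *
    (rexp (-(u * t ^ 2 + a ^ 2 * ((k : ℝ) + 1) ^ 2 / (4 * u))) : ℂ) = D at hsum ⊢
  generalize Complex.Gamma (s - 1 / 2) = G at hsum ⊢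
  have hΓ := Complex.Gamma_ne_zero_of_re_pos hs0
  have hπ : (√π : ℂ) ≠ 0 := by exact_mod_cast (sqrt_pos.2 pi_pos).ne'
  rw [neg_mul, ← mul_neg]
  field_simp at hsum ⊢
  linear_combination hsum
end
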